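/- arXiv:1902.08363 — 3 statements merged into one kernel-verified Lean document; each statement's English description precedes it below -/
import Mathlib

section
/- Let T > 0, let N be a positive integer with τ = T/N ≤ 1, and let Q be a symmetric positive definite M₁M₂×M₁M₂ real matrix such that the symmetric part of Q·A, namely (Q·A + (Q·A)ᵀ)/2, is negative semidefinite. Suppose vectors u^0 = φ, u^1, …, u^N ∈ ℝ^{M₁M₂} and f^{1/2}, …, f^{N−1/2} ∈ ℝ^{M₁M₂} satisfy, for n = 1,…,N, (u^n − u^{n−1})/τ = A·(u^{n−1} + u^n) + f^{n−1/2}. Then for every n = 1,…,N: ‖u^n‖²_Q ≤ exp(2T)·‖φ‖²_Q + (exp(2T) − 1)·max_{1≤k≤n} ‖f^{k−1/2}‖²_Q, where ‖v‖²_Q = h₁·h₂·vᵀQv. -/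
open Matrix Kronecker

/-- The Grünwald–Letnikov coefficients `g_k^{(γ)}`. -/
noncomputable def gcoef (γ : ℝ) : ℕ → ℝ
  | 0 => 1
  | (k+1) => (1 - (γ + 1) / (k + 1 : ℕ)) * gcoef γ k

/-- The WSGD coefficients `w_k^{(γ)}`. -/
noncomputable def wcoef (γ : ℝ) : ℕ → ℝ
  | 0 => γ / 2 * gcoef γ 0
  | (k+1) => γ / 2 * gcoef γ (k+1) + (2 - γ) / 2 * gcoef γ k

/-- The `m × m` lower-Hessenberg Toeplitz matrix `G_γ`. -/
noncomputable def Gmat (γ : ℝ) (m : ℕ) : Matrix (Fin m) (Fin m) ℝ :=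
  Matrix.of fun i j => if (j : ℕ) ≤ (i : ℕ) + 1 then wcoef γ ((i : ℕ) + 1 - (j : ℕ)) else 0

/-!
Testing the Crank–Nicolson step `uⁿ - uⁿ⁻¹ = τ (A (uⁿ⁻¹ + uⁿ) + f)` against `Q (uⁿ⁻¹ + uⁿ)` turns
the left side into `‖uⁿ‖²_Q - ‖uⁿ⁻¹‖²_Q`, the `A`-term is `≤ 0` by dissipativity of `QA`, and the
source term is absorbed by AM–GM. This gives `(2 - τ)‖uⁿ‖²_Q ≤ (2 + τ)‖uⁿ⁻¹‖²_Q + 2τ‖f‖²_Q`, and a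
discrete Gronwall argument with amplification factor `(2 + τ)/(2 - τ) ≤ e^{2τ}` finishes.
-/

lemma discrete_gronwall_pow {a : ℕ → ℝ} {ρ B : ℝ} (hρ : 0 ≤ ρ) {n : ℕ}
    (h : ∀ m < n, a (m + 1) ≤ ρ * a m + (ρ - 1) * B) :
    a n ≤ ρ ^ n * a 0 + (ρ ^ n - 1) * B := by
  induction n with
  | zero => simp
  | succ m ih =>
    calc a (m + 1) ≤ ρ * a m + (ρ - 1) * B := h m m.lt_succ_self
      _ ≤ ρ * (ρ ^ m * a 0 + (ρ ^ m - 1) * B) + (ρ - 1) * B := by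
        gcongr
        exact ih fun k hk => h k (hk.trans m.lt_succ_self)
      _ = ρ ^ (m + 1) * a 0 + (ρ ^ (m + 1) - 1) * B := by ring

lemma crankNicolson_factor_le_exp {τ : ℝ} (h0 : 0 ≤ τ) (h1 : τ ≤ 1) :
    (2 + τ) / (2 - τ) ≤ Real.exp (2 * τ) := by
  rw [div_le_iff₀ (by linarith)]
  nlinarith [Real.add_one_le_exp (2 * τ)]

lemma crankNicolson_factor_pow_le_exp {τ T : ℝ} {n : ℕ} (h0 : 0 ≤ τ) (h1 : τ ≤ 1)
    (hT : n * τ ≤ T) : ((2 + τ) / (2 - τ)) ^ n ≤ Real.exp (2 * T) :=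
  calc ((2 + τ) / (2 - τ)) ^ n ≤ Real.exp (2 * τ) ^ n := by
        gcongr
        · exact div_nonneg (by linarith) (by linarith)
        · exact crankNicolson_factor_le_exp h0 h1
    _ = Real.exp (2 * (n * τ)) := by rw [← Real.exp_nat_mul]; ring_nf
    _ ≤ Real.exp (2 * T) := by gcongr

namespace Matrix

variable {ι : Type*} [Fintype ι]

lemma dotProduct_mulVec_nonpos_of_posSemidef_neg_symm {M : Matrix ι ι ℝ}
    (hM : (-(((1 : ℝ) / 2) • (M + Mᵀ))).PosSemidef) (x : ι → ℝ) :
    x ⬝ᵥ M *ᵥ x ≤ 0 := by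
  have h := hM.dotProduct_mulVec_nonneg x
  have htr : x ⬝ᵥ Mᵀ *ᵥ x = x ⬝ᵥ M *ᵥ x := by
    rw [mulVec_transpose, dotProduct_comm, dotProduct_mulVec]
  simp only [star_trivial, neg_mulVec, smul_mulVec, add_mulVec, dotProduct_neg, dotProduct_smul,
    dotProduct_add, htr, smul_eq_mul] at h
  linarith

lemma IsSymm.dotProduct_mulVec_comm {Q : Matrix ι ι ℝ} (hQ : Q.IsSymm) (x y : ι → ℝ) :
    x ⬝ᵥ Q *ᵥ y = y ⬝ᵥ Q *ᵥ x := by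
  rw [dotProduct_mulVec, ← mulVec_transpose, hQ.eq, dotProduct_comm]

lemma PosSemidef.two_mul_dotProduct_mulVec_le {Q : Matrix ι ι ℝ} (hQ : Q.PosSemidef)
    (x y : ι → ℝ) : 2 * (x ⬝ᵥ Q *ᵥ y) ≤ x ⬝ᵥ Q *ᵥ x + y ⬝ᵥ Q *ᵥ y := by
  have h := hQ.dotProduct_mulVec_nonneg (x - y)
  simp only [star_trivial, mulVec_sub, dotProduct_sub, sub_dotProduct,
    (isHermitian_iff_isSymm.mp hQ.isHermitian).dotProduct_mulVec_comm y x] at h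
  linarith

lemma crankNicolson_energy_step {Q A : Matrix ι ι ℝ} (hQ : Q.PosSemidef)
    (hQA : ∀ x, x ⬝ᵥ (Q * A) *ᵥ x ≤ 0) {τ : ℝ} (hτ0 : 0 < τ) (hτ2 : τ < 2) {v w g : ι → ℝ}
    (h : (1 / τ) • (v - w) = A *ᵥ (w + v) + g) :
    v ⬝ᵥ Q *ᵥ v ≤
      (2 + τ) / (2 - τ) * (w ⬝ᵥ Q *ᵥ w) + ((2 + τ) / (2 - τ) - 1) * (g ⬝ᵥ Q *ᵥ g) := by
  set s := w + v
  have hsymm := (isHermitian_iff_isSymm.mp hQ.isHermitian).dotProduct_mulVec_comm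
  have hdiff : v - w = τ • (A *ᵥ s + g) := by
    rw [← h, smul_smul, mul_one_div_cancel hτ0.ne', one_smul]
  have htest : s ⬝ᵥ Q *ᵥ (v - w) = v ⬝ᵥ Q *ᵥ v - w ⬝ᵥ Q *ᵥ w := by
    simp only [s, mulVec_sub, dotProduct_sub, add_dotProduct, hsymm w v]
    ring
  have hscheme : s ⬝ᵥ Q *ᵥ (v - w) = τ * (s ⬝ᵥ (Q * A) *ᵥ s) + τ * (s ⬝ᵥ Q *ᵥ g) := by
    rw [hdiff, mulVec_smul, mulVec_add, dotProduct_smul, dotProduct_add, mulVec_mulVec,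
      smul_eq_mul, mul_add]
  have hsource : s ⬝ᵥ Q *ᵥ g ≤ (1 / 4) * (s ⬝ᵥ Q *ᵥ s) + g ⬝ᵥ Q *ᵥ g := by
    have h := hQ.two_mul_dotProduct_mulVec_le ((1 / 2 : ℝ) • s) g
    simp only [mulVec_smul, dotProduct_smul, smul_dotProduct, smul_eq_mul] at h
    linarith
  have hsum : s ⬝ᵥ Q *ᵥ s ≤ 2 * (v ⬝ᵥ Q *ᵥ v + w ⬝ᵥ Q *ᵥ w) := by
    have h := hQ.two_mul_dotProduct_mulVec_le w v
    simp only [s, mulVec_add, dotProduct_add, add_dotProduct, hsymm v w]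
    linarith
  have h2τ : 0 < 2 - τ := by linarith
  have henergy : (2 - τ) * (v ⬝ᵥ Q *ᵥ v) ≤ (2 + τ) * (w ⬝ᵥ Q *ᵥ w) + 2 * τ * (g ⬝ᵥ Q *ᵥ g) := by
    nlinarith [hQA s]
  calc v ⬝ᵥ Q *ᵥ v = (2 - τ) * (v ⬝ᵥ Q *ᵥ v) / (2 - τ) := by field_simp
    _ ≤ ((2 + τ) * (w ⬝ᵥ Q *ᵥ w) + 2 * τ * (g ⬝ᵥ Q *ᵥ g)) / (2 - τ) := by gcongr
    _ = _ := by field_simp; ring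

lemma crankNicolson_energy_le_pow {Q A : Matrix ι ι ℝ} (hQ : Q.PosSemidef)
    (hQA : ∀ x, x ⬝ᵥ (Q * A) *ᵥ x ≤ 0) {τ : ℝ} (hτ0 : 0 < τ) (hτ2 : τ < 2)
    {u f : ℕ → ι → ℝ} {n : ℕ} {B : ℝ}
    (hu : ∀ k, 1 ≤ k → k ≤ n → (1 / τ) • (u k - u (k - 1)) = A *ᵥ (u (k - 1) + u k) + f k)
    (hB : ∀ k ∈ Finset.Icc 1 n, f k ⬝ᵥ Q *ᵥ f k ≤ B) :
    u n ⬝ᵥ Q *ᵥ u n ≤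
      ((2 + τ) / (2 - τ)) ^ n * (u 0 ⬝ᵥ Q *ᵥ u 0) + (((2 + τ) / (2 - τ)) ^ n - 1) * B := by
  have hρ1 : 1 ≤ (2 + τ) / (2 - τ) := by rw [one_le_div₀ (by linarith)]; linarith
  refine discrete_gronwall_pow (a := fun m => u m ⬝ᵥ Q *ᵥ u m) (by linarith) fun m hm => ?_
  have hstep := crankNicolson_energy_step hQ hQA hτ0 hτ2 (v := u (m + 1)) (w := u m)
    (by simpa only [Nat.add_sub_cancel] using hu (m + 1) (by omega) hm)
  refine hstep.trans ?_
  gcongr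
  exact hB (m + 1) (Finset.mem_Icc.mpr ⟨by omega, hm⟩)

end Matrix

theorem CN_scheme_2D_stability_general (T : ℝ)
    (hT : 0 < T)
    (M₁ M₂ N : ℕ) (hτ : T / N ≤ 1)
    (xL xR yL yR : ℝ) (hx : xL < xR) (hy : yL < yR)
    (h₁ h₂ : ℝ) (hh₁ : h₁ = (xR - xL) / (M₁ + 1)) (hh₂ : h₂ = (yR - yL) / (M₂ + 1))
    (A : Matrix (Fin M₂ × Fin M₁) (Fin M₂ × Fin M₁) ℝ)
    (Q : Matrix (Fin M₂ × Fin M₁) (Fin M₂ × Fin M₁) ℝ) (hQ : Q.PosDef)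
    (hQA : (-(((1 : ℝ) / 2) • (Q * A + (Q * A)ᵀ))).PosSemidef)
    (u f : ℕ → (Fin M₂ × Fin M₁) → ℝ) (φ : (Fin M₂ × Fin M₁) → ℝ) (hu0 : u 0 = φ)
    (heq : ∀ n, 1 ≤ n → n ≤ N →
      (1 / (T / N)) • (u n - u (n - 1)) = A *ᵥ (u (n - 1) + u n) + f n) :
    ∀ n, ∀ hn1 : 1 ≤ n, n ≤ N →
      h₁ * h₂ * (u n ⬝ᵥ (Q *ᵥ u n)) ≤
        Real.exp (2 * T) * (h₁ * h₂ * (φ ⬝ᵥ (Q *ᵥ φ))) +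
        (Real.exp (2 * T) - 1) *
          (Finset.Icc 1 n).sup' (Finset.nonempty_Icc.mpr hn1)
            (fun k => h₁ * h₂ * (f k ⬝ᵥ (Q *ᵥ f k))) := by
  intro n hn1 hnN
  set B := (Finset.Icc 1 n).sup' (Finset.nonempty_Icc.mpr hn1)
    (fun k => h₁ * h₂ * (f k ⬝ᵥ (Q *ᵥ f k)))
  have hc : 0 ≤ h₁ * h₂ := by
    rw [hh₁, hh₂]
    exact mul_nonneg (div_nonneg (by linarith) (by positivity))
      (div_nonneg (by linarith) (by positivity))
  have hN : (0 : ℝ) < N := by exact_mod_cast hn1.trans hnN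
  have hτ0 : 0 < T / N := div_pos hT hN
  have hnτ : n * (T / N) ≤ T := by
    rw [mul_div_assoc', div_le_iff₀ hN, mul_comm]
    gcongr
  have hscale : ∀ x, x ⬝ᵥ ((h₁ * h₂) • Q) *ᵥ x = h₁ * h₂ * (x ⬝ᵥ Q *ᵥ x) := fun x => by
    rw [smul_mulVec, dotProduct_smul, smul_eq_mul]
  have henergy_nonneg : ∀ x, 0 ≤ h₁ * h₂ * (x ⬝ᵥ Q *ᵥ x) := fun x =>
    mul_nonneg hc (by simpa using hQ.posSemidef.dotProduct_mulVec_nonneg x)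
  have hfB : ∀ k ∈ Finset.Icc 1 n, h₁ * h₂ * (f k ⬝ᵥ Q *ᵥ f k) ≤ B := fun k hk =>
    Finset.le_sup' (fun k => h₁ * h₂ * (f k ⬝ᵥ (Q *ᵥ f k))) hk
  have hQA' : ∀ x, x ⬝ᵥ ((h₁ * h₂) • Q * A) *ᵥ x ≤ 0 := fun x => by
    rw [smul_mul, smul_mulVec, dotProduct_smul, smul_eq_mul]
    exact mul_nonpos_of_nonneg_of_nonpos hc (dotProduct_mulVec_nonpos_of_posSemidef_neg_symm hQA x)
  have hstab := crankNicolson_energy_le_pow (hQ.posSemidef.smul hc) hQA' hτ0 (by linarith)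
    (fun k hk1 hkn => heq k hk1 (hkn.trans hnN)) (fun k hk => (hscale (f k)).trans_le (hfB k hk))
  rw [hscale, hscale, hu0] at hstab
  have hB : 0 ≤ B := (henergy_nonneg (f n)).trans (hfB n (Finset.right_mem_Icc.mpr hn1))
  have hρn := crankNicolson_factor_pow_le_exp hτ0.le hτ hnτ
  refine hstab.trans ?_
  gcongr
  exact henergy_nonneg φ

/-- Two-dimensional stability (Theorem 3.1): if `Q` is symmetric positive definite with
`(QA + (QA)ᵀ)/2` negative semidefinite, then the Crank–Nicolson/WSGD scheme for the 2D
one-side space fractional diffusion equation satisfies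
`‖uⁿ‖²_Q ≤ e^{2T}‖φ‖²_Q + (e^{2T} − 1) max_{1≤k≤n}‖fᵏ⁻¹ᐟ²‖²_Q`
with `‖v‖²_Q = h₁ h₂ vᵀQv` and `f k` standing for `f^{k−1/2}`. -/
theorem CN_scheme_2D_stability (α β T : ℝ)
    (hα : α ∈ Set.Ioo (1 : ℝ) 2) (hβ : β ∈ Set.Ioo (1 : ℝ) 2) (hT : 0 < T)
    (M₁ M₂ N : ℕ) (hM₁ : 0 < M₁) (hM₂ : 0 < M₂) (hN : 0 < N) (hτ : T / N ≤ 1)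
    (xL xR yL yR : ℝ) (hx : xL < xR) (hy : yL < yR)
    (h₁ h₂ : ℝ) (hh₁ : h₁ = (xR - xL) / (M₁ + 1)) (hh₂ : h₂ = (yR - yL) / (M₂ + 1))
    (d e : ℝ → ℝ → ℝ)
    (hde : ∀ x ∈ Set.Ioo xL xR, ∀ y ∈ Set.Ioo yL yR, 0 ≤ d x y ∧ 0 ≤ e x y)
    (D E A : Matrix (Fin M₂ × Fin M₁) (Fin M₂ × Fin M₁) ℝ)
    (hD : D = Matrix.diagonal fun p => d (xL + ((p.2 : ℕ) + 1) * h₁) (yL + ((p.1 : ℕ) + 1) * h₂))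
    (hE : E = Matrix.diagonal fun p => e (xL + ((p.2 : ℕ) + 1) * h₁) (yL + ((p.1 : ℕ) + 1) * h₂))
    (hA : A = (1 / (2 * h₁ ^ α)) • (D * ((1 : Matrix (Fin M₂) (Fin M₂) ℝ) ⊗ₖ Gmat α M₁)) +
              (1 / (2 * h₂ ^ β)) • (E * (Gmat β M₂ ⊗ₖ (1 : Matrix (Fin M₁) (Fin M₁) ℝ))))
    (Q : Matrix (Fin M₂ × Fin M₁) (Fin M₂ × Fin M₁) ℝ) (hQ : Q.PosDef)
    (hQA : (-(((1 : ℝ) / 2) • (Q * A + (Q * A)ᵀ))).PosSemidef)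
    (u f : ℕ → (Fin M₂ × Fin M₁) → ℝ) (φ : (Fin M₂ × Fin M₁) → ℝ) (hu0 : u 0 = φ)
    (heq : ∀ n, 1 ≤ n → n ≤ N →
      (1 / (T / N)) • (u n - u (n - 1)) = A *ᵥ (u (n - 1) + u n) + f n) :
    ∀ n, ∀ hn1 : 1 ≤ n, n ≤ N →
      h₁ * h₂ * (u n ⬝ᵥ (Q *ᵥ u n)) ≤
        Real.exp (2 * T) * (h₁ * h₂ * (φ ⬝ᵥ (Q *ᵥ φ))) +
        (Real.exp (2 * T) - 1) *
          (Finset.Icc 1 n).sup' (Finset.nonempty_Icc.mpr hn1)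
            (fun k => h₁ * h₂ * (f k ⬝ᵥ (Q *ᵥ f k))) :=
  CN_scheme_2D_stability_general T hT M₁ M₂ N hτ xL xR yL yR hx hy h₁ h₂ hh₁ hh₂ A Q hQ hQA u f φ
    hu0 heq
end

section
/- Suppose the coefficients are separable: d(x,y) = d̃(x)·d̂(y) and e(x,y) = ẽ(x)·ê(y), where 0 < d̃_− ≤ d̃(x) ≤ d̃_+ and 0 < ê_− ≤ ê(y) ≤ ê_+ for positive constants d̃_−, d̃_+, ê_−, ê_+, and d̂ ≥ 0, ẽ ≥ 0. Let D̃ = diag(d̃(x_1),…,d̃(x_{M₁})), D̂ = diag(d̂(y_1),…,d̂(y_{M₂})), Ẽ = diag(ẽ(x_1),…,ẽ(x_{M₁})), Ê = diag(ê(y_1),…,ê(y_{M₂})), so that D = D̂ ⊗ D̃ and E = Ê ⊗ Ẽ. Then X = Ê⁻¹ ⊗ D̃⁻¹ is symmetric positive definite and the symmetric part of X·A, namely (X·A + (X·A)ᵀ)/2, is negative semidefinite. -/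
open Matrix Kronecker

/-!
Multiplying by `X` turns `A` into `c₁ (Ê⁻¹D̂ ⊗ G_α) + c₂ (G_β ⊗ D̃⁻¹Ẽ)` with nonnegative diagonal
`Ê⁻¹D̂` and `D̃⁻¹Ẽ`, so the negated symmetric part of `X A` is a nonnegative combination of
Kronecker products of positive semidefinite matrices with `-(G_γ + G_γᵀ)`. The latter is
positive semidefinite by Gershgorin's theorem: for `γ ∈ [1, 2]` its off-diagonal entries are
`≤ 0` (they are `-(w_0 + w_2)` or `-w_k` with `k ≥ 3`) and its row sums are `≥ 0`, since each
partial sum `∑_{k<n} w_k` with `n ≥ 3` is `≤ 0`. That sign comes from the telescoping identity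
`γ ∑_{k≤n} g_k = -(n+1) g_{n+1}` together with `g_k ≥ 0` for `k ≥ 2`.
-/
open Finset

section Coefficients

variable {γ : ℝ}

lemma gcoef_succ (γ : ℝ) (k : ℕ) : gcoef γ (k + 1) = (1 - (γ + 1) / (k + 1)) * gcoef γ k := by
  simp [gcoef]

lemma gcoef_nonneg (h1 : 1 ≤ γ) (h2 : γ ≤ 2) {k : ℕ} (hk : 2 ≤ k) : 0 ≤ gcoef γ k := by
  induction k, hk using Nat.le_induction with
  | base =>
    simp only [gcoef, Nat.reduceAdd, Nat.cast_ofNat, zero_add, Nat.cast_one, div_one,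
      sub_add_cancel_right, mul_one, mul_neg, Left.nonneg_neg_iff]
    nlinarith
  | succ k hk ih =>
    have : (2 : ℝ) ≤ k := by exact_mod_cast hk
    rw [gcoef_succ]
    refine mul_nonneg ?_ ih
    rw [sub_nonneg, div_le_one (by positivity)]
    linarith

lemma mul_sum_range_gcoef (γ : ℝ) (n : ℕ) :
    γ * ∑ k ∈ range (n + 1), gcoef γ k = -((n + 1) * gcoef γ (n + 1)) := by
  induction n with
  | zero => simp [gcoef]
  | succ n ih =>
    rw [sum_range_succ, mul_add, ih, gcoef_succ γ (n + 1)]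
    push_cast
    field_simp
    ring

lemma sum_range_gcoef_nonpos (h1 : 1 ≤ γ) (h2 : γ ≤ 2) {n : ℕ} (hn : 2 ≤ n) :
    ∑ k ∈ range n, gcoef γ k ≤ 0 := by
  obtain ⟨n, rfl⟩ : ∃ m, n = m + 1 := ⟨n - 1, by omega⟩
  have h := mul_sum_range_gcoef γ n
  have hg := gcoef_nonneg h1 h2 (k := n + 1) (by omega)
  nlinarith

lemma sum_range_wcoef (γ : ℝ) (n : ℕ) :
    ∑ k ∈ range (n + 2), wcoef γ k =
      γ / 2 * ∑ k ∈ range (n + 2), gcoef γ k + (2 - γ) / 2 * ∑ k ∈ range (n + 1), gcoef γ k := by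
  rw [sum_range_succ', sum_range_succ' (gcoef γ) (n + 1)]
  simp only [wcoef, sum_add_distrib, mul_add, mul_sum]
  ring

lemma sum_range_wcoef_nonpos (h1 : 1 ≤ γ) (h2 : γ ≤ 2) {n : ℕ} (hn : 3 ≤ n) :
    ∑ k ∈ range n, wcoef γ k ≤ 0 := by
  obtain ⟨n, rfl⟩ : ∃ m, n = m + 2 := ⟨n - 2, by omega⟩
  rw [sum_range_wcoef]
  have := sum_range_gcoef_nonpos h1 h2 (n := n + 2) (by omega)
  have := sum_range_gcoef_nonpos h1 h2 (n := n + 1) (by omega)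
  nlinarith

lemma wcoef_one_nonpos (h1 : 1 ≤ γ) : wcoef γ 1 ≤ 0 := by
  simp only [wcoef, gcoef]
  nlinarith

lemma wcoef_zero_add_wcoef_two_nonneg (h1 : 1 ≤ γ) : 0 ≤ wcoef γ 0 + wcoef γ 2 := by
  simp only [wcoef, gcoef]
  nlinarith [mul_nonneg (mul_nonneg (by linarith : (0 : ℝ) ≤ γ) (sub_nonneg.2 h1))
    (by linarith : (0 : ℝ) ≤ γ + 2)]

lemma wcoef_nonneg (h1 : 1 ≤ γ) (h2 : γ ≤ 2) {k : ℕ} (hk : 3 ≤ k) : 0 ≤ wcoef γ k := by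
  obtain ⟨k, rfl⟩ : ∃ m, k = m + 1 := ⟨k - 1, by omega⟩
  have := gcoef_nonneg h1 h2 (k := k + 1) (by omega)
  have := gcoef_nonneg h1 h2 (k := k) (by omega)
  simp only [wcoef]
  nlinarith

end Coefficients

lemma Gmat_apply (γ : ℝ) (m : ℕ) (i j : Fin m) :
    Gmat γ m i j = if (j : ℕ) ≤ i + 1 then wcoef γ (i + 1 - j) else 0 := rfl

-- The truncated differences `i + 2 - m` and `1 - i` are `1` in the last, resp. first, row
-- and `0` elsewhere.
lemma sum_Gmat_row (γ : ℝ) (m : ℕ) (i : Fin m) :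
    ∑ j, Gmat γ m i j = ∑ k ∈ Ico (i + 2 - m) (i + 2), wcoef γ k := by
  simp only [Gmat_apply]
  rw [Fin.sum_univ_eq_sum_range (fun j => if j ≤ i + 1 then wcoef γ (i + 1 - j) else 0),
    ← sum_filter]
  refine sum_nbij' (fun j => i + 1 - j) (fun k => i + 1 - k) ?_ ?_ ?_ ?_ fun j _ => rfl <;>
    simp only [mem_filter, mem_range, mem_Ico, tsub_le_iff_right, and_imp] <;> omega

lemma sum_Gmat_col (γ : ℝ) (m : ℕ) (i : Fin m) :
    ∑ j, Gmat γ m j i = ∑ k ∈ Ico (1 - (i : ℕ)) (m + 1 - i), wcoef γ k := by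
  simp only [Gmat_apply]
  rw [Fin.sum_univ_eq_sum_range (fun j => if (i : ℕ) ≤ j + 1 then wcoef γ (j + 1 - i) else 0),
    ← sum_filter]
  refine sum_nbij' (fun j => j + 1 - i) (fun k => k + i - 1) ?_ ?_ ?_ ?_ fun j _ => rfl <;>
    simp only [mem_filter, mem_range, mem_Ico, tsub_le_iff_right, and_imp] <;> omega

namespace Matrix

variable {n : Type*} [Fintype n] [DecidableEq n]

theorem posSemidef_of_isSymm_of_diagDominant {A : Matrix n n ℝ} (hA : A.IsSymm)
    (hdom : ∀ k, ∑ j ∈ univ.erase k, |A k j| ≤ A k k) : A.PosSemidef := by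
  have hH : A.IsHermitian := isHermitian_iff_isSymm.2 hA
  refine hH.posSemidef_iff_eigenvalues_nonneg.2 fun i => show 0 ≤ hH.eigenvalues i from ?_
  have hμ : Module.End.HasEigenvalue (toLin' A) (hH.eigenvalues i) := by
    rw [Module.End.hasEigenvalue_iff_mem_spectrum, spectrum_toLin']
    exact hH.eigenvalues_mem_spectrum_real i
  obtain ⟨k, hk⟩ := eigenvalue_mem_ball hμ
  simp only [Metric.mem_closedBall, Real.dist_eq, Real.norm_eq_abs] at hk
  linarith [hdom k, neg_abs_le (hH.eigenvalues i - A k k)]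

theorem posSemidef_neg_of_offDiag_nonneg_of_sum_nonpos {H : Matrix n n ℝ} (hH : H.IsSymm)
    (hoff : ∀ i j, i ≠ j → 0 ≤ H i j) (hrow : ∀ i, ∑ j, H i j ≤ 0) : (-H).PosSemidef := by
  refine posSemidef_of_isSymm_of_diagDominant hH.neg fun k => ?_
  have habs : ∑ j ∈ univ.erase k, |(-H) k j| = ∑ j ∈ univ.erase k, H k j :=
    sum_congr rfl fun j hj => by
      rw [neg_apply, abs_neg, abs_of_nonneg (hoff k j (ne_of_mem_erase hj).symm)]
  rw [habs, neg_apply]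
  linarith [add_sum_erase univ (H k) (mem_univ k), hrow k]

end Matrix

section Gmat

variable {γ : ℝ} (h1 : 1 ≤ γ) (h2 : γ ≤ 2)
include h1 h2

lemma Gmat_add_Gmat_nonneg_of_lt {m : ℕ} {i j : Fin m} (hji : j < i) :
    0 ≤ Gmat γ m i j + Gmat γ m j i := by
  have hji : (j : ℕ) < i := hji
  rw [Gmat_apply, Gmat_apply, if_pos (by omega)]
  by_cases hsub : (i : ℕ) = j + 1
  · rw [if_pos (by omega), hsub, show (j : ℕ) + 1 + 1 - j = 2 by omega, Nat.sub_self]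
    linarith [wcoef_zero_add_wcoef_two_nonneg h1]
  · rw [if_neg (by omega), add_zero]
    exact wcoef_nonneg h1 h2 (by omega)

lemma sum_Gmat_add_transpose_nonpos (m : ℕ) (i : Fin m) :
    ∑ j, (Gmat γ m + (Gmat γ m)ᵀ) i j ≤ 0 := by
  simp only [Matrix.add_apply, transpose_apply, sum_add_distrib, sum_Gmat_row, sum_Gmat_col]
  rw [sum_Ico_eq_sub _ (by omega), sum_Ico_eq_sub _ (by omega)]
  have hS : ∀ n, 3 ≤ n → ∑ k ∈ range n, wcoef γ k ≤ 0 := fun n => sum_range_wcoef_nonpos h1 h2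
  have hw1 : ∑ k ∈ range 2, wcoef γ k - ∑ k ∈ range 1, wcoef γ k ≤ 0 := by
    simpa [sum_range_succ] using wcoef_one_nonpos h1
  have hi := i.isLt
  by_cases hi0 : (i : ℕ) = 0 <;> by_cases hlast : (i : ℕ) + 1 = m
  · rw [show (i : ℕ) + 2 - m = 1 by omega, show 1 - (i : ℕ) = 1 by omega,
      show (i : ℕ) + 2 = 2 by omega, show m + 1 - (i : ℕ) = 2 by omega]
    linarith
  · rw [show (i : ℕ) + 2 - m = 0 by omega, show 1 - (i : ℕ) = 1 by omega,
      show (i : ℕ) + 2 = 2 by omega, show m + 1 - (i : ℕ) = m + 1 by omega]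
    linarith [hS (m + 1) (by omega), sum_range_zero (wcoef γ)]
  · rw [show (i : ℕ) + 2 - m = 1 by omega, show 1 - (i : ℕ) = 0 by omega,
      show (i : ℕ) + 2 = m + 1 by omega, show m + 1 - (i : ℕ) = 2 by omega]
    linarith [hS (m + 1) (by omega), sum_range_zero (wcoef γ)]
  · rw [show (i : ℕ) + 2 - m = 0 by omega, show 1 - (i : ℕ) = 0 by omega]
    linarith [hS (i + 2) (by omega), hS (m + 1 - i) (by omega), sum_range_zero (wcoef γ)]

theorem neg_Gmat_add_transpose_posSemidef (m : ℕ) : (-(Gmat γ m + (Gmat γ m)ᵀ)).PosSemidef := by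
  refine posSemidef_neg_of_offDiag_nonneg_of_sum_nonpos (isSymm_add_transpose_self _)
    (fun i j hij => ?_) (sum_Gmat_add_transpose_nonpos h1 h2 m)
  rw [Matrix.add_apply, transpose_apply]
  rcases lt_or_gt_of_ne hij with hij | hij
  · linarith [Gmat_add_Gmat_nonneg_of_lt h1 h2 hij]
  · exact Gmat_add_Gmat_nonneg_of_lt h1 h2 hij

end Gmat

namespace Matrix

variable {m n : Type*} [Fintype m] [Fintype n]

theorem posSemidef_neg_symmPart_of_kronecker {P : Matrix m m ℝ} {Q : Matrix n n ℝ}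
    (hP : P.PosSemidef) (hQ : Q.PosSemidef) {G₁ : Matrix n n ℝ} {G₂ : Matrix m m ℝ}
    (hG₁ : (-(G₁ + G₁ᵀ)).PosSemidef) (hG₂ : (-(G₂ + G₂ᵀ)).PosSemidef) {c₁ c₂ : ℝ}
    (hc₁ : 0 ≤ c₁) (hc₂ : 0 ≤ c₂) {B : Matrix (m × n) (m × n) ℝ}
    (hB : B = c₁ • (P ⊗ₖ G₁) + c₂ • (G₂ ⊗ₖ Q)) :
    (-((1 / 2 : ℝ) • (B + Bᵀ))).PosSemidef := by
  have hPt := (isHermitian_iff_isSymm.1 hP.isHermitian).apply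
  have hQt := (isHermitian_iff_isSymm.1 hQ.isHermitian).apply
  have hsplit : -((1 / 2 : ℝ) • (B + Bᵀ)) =
      (c₁ / 2) • (P ⊗ₖ (-(G₁ + G₁ᵀ))) + (c₂ / 2) • ((-(G₂ + G₂ᵀ)) ⊗ₖ Q) := by
    ext ⟨a, b⟩ ⟨c, d⟩
    simp only [hB, transpose_add, transpose_smul, neg_apply, add_apply, smul_apply,
      kroneckerMap_apply, smul_eq_mul, transpose_apply, hPt a c, hQt b d]
    ring
  rw [hsplit]
  exact ((hP.kronecker hG₁).smul (by positivity)).add ((hG₂.kronecker hQ).smul (by positivity))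

variable [DecidableEq m] [DecidableEq n]

theorem inv_diagonal_of_ne_zero {K : Type*} [Field K] {v : n → K} (hv : ∀ i, v i ≠ 0) :
    (diagonal v)⁻¹ = diagonal v⁻¹ :=
  inv_eq_left_inv <| by
    rw [diagonal_mul_diagonal, ← diagonal_one]
    exact congrArg diagonal (funext fun i => inv_mul_cancel₀ (hv i))

theorem posSemidef_inv_diagonal_mul_diagonal {v w : n → ℝ} (hv : ∀ i, 0 < v i)
    (hw : ∀ i, 0 ≤ w i) : ((diagonal v)⁻¹ * diagonal w).PosSemidef := by
  rw [inv_diagonal_of_ne_zero fun i => (hv i).ne', diagonal_mul_diagonal, posSemidef_diagonal_iff]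
  exact fun i => mul_nonneg (inv_nonneg.2 (hv i).le) (hw i)

theorem inv_kronecker_inv_mul {α : Type*} [CommRing α] {E P G₂ : Matrix m m α}
    {D Q G₁ : Matrix n n α} (hE : IsUnit E) (hD : IsUnit D) (c₁ c₂ : α) :
    (E⁻¹ ⊗ₖ D⁻¹) * (c₁ • ((P ⊗ₖ D) * (1 ⊗ₖ G₁)) + c₂ • ((E ⊗ₖ Q) * (G₂ ⊗ₖ 1))) =
      c₁ • ((E⁻¹ * P) ⊗ₖ G₁) + c₂ • (G₂ ⊗ₖ (D⁻¹ * Q)) := by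
  rw [mul_add, mul_smul_comm, mul_smul_comm, ← Matrix.mul_assoc, ← Matrix.mul_assoc,
    ← mul_kronecker_mul, ← mul_kronecker_mul, ← mul_kronecker_mul, ← mul_kronecker_mul,
    nonsing_inv_mul _ ((isUnit_iff_isUnit_det D).1 hD),
    nonsing_inv_mul _ ((isUnit_iff_isUnit_det E).1 hE)]
  simp only [Matrix.mul_one, Matrix.one_mul]

end Matrix

lemma add_mul_div_mem_Ioo {a b : ℝ} (hab : a < b) {M i : ℕ} (hi : i < M) :
    a + (i + 1) * ((b - a) / (M + 1)) ∈ Set.Ioo a b := by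
  have hi' : (i : ℝ) + 1 < M + 1 := by exact_mod_cast Nat.succ_lt_succ hi
  have hM : (0 : ℝ) < M + 1 := by positivity
  rw [mul_div_assoc']
  constructor
  · have : 0 < (i + 1) * (b - a) / (M + 1) := div_pos (by nlinarith) hM
    linarith
  · rw [← lt_sub_iff_add_lt', div_lt_iff₀ hM]
    nlinarith

theorem separable_coefficients_mem_general (α β : ℝ)
    (hα : α ∈ Set.Ioo (1 : ℝ) 2) (hβ : β ∈ Set.Ioo (1 : ℝ) 2)
    (M₁ M₂ : ℕ)
    (xL xR yL yR : ℝ) (hx : xL < xR) (hy : yL < yR)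
    (h₁ h₂ : ℝ) (hh₁ : h₁ = (xR - xL) / (M₁ + 1)) (hh₂ : h₂ = (yR - yL) / (M₂ + 1))
    (dt dh et eh : ℝ → ℝ)
    (dtm dtp ehm ehp : ℝ) (hdtm : 0 < dtm) (hehm : 0 < ehm)
    (hdt : ∀ x ∈ Set.Ioo xL xR, dtm ≤ dt x ∧ dt x ≤ dtp)
    (heh : ∀ y ∈ Set.Ioo yL yR, ehm ≤ eh y ∧ eh y ≤ ehp)
    (hdh : ∀ y ∈ Set.Ioo yL yR, 0 ≤ dh y)
    (het : ∀ x ∈ Set.Ioo xL xR, 0 ≤ et x)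
    (Dt Et : Matrix (Fin M₁) (Fin M₁) ℝ) (Dh Eh : Matrix (Fin M₂) (Fin M₂) ℝ)
    (hDt : Dt = Matrix.diagonal fun i : Fin M₁ => dt (xL + ((i : ℕ) + 1) * h₁))
    (hEt : Et = Matrix.diagonal fun i : Fin M₁ => et (xL + ((i : ℕ) + 1) * h₁))
    (hDh : Dh = Matrix.diagonal fun j : Fin M₂ => dh (yL + ((j : ℕ) + 1) * h₂))
    (hEh : Eh = Matrix.diagonal fun j : Fin M₂ => eh (yL + ((j : ℕ) + 1) * h₂))
    (A : Matrix (Fin M₂ × Fin M₁) (Fin M₂ × Fin M₁) ℝ)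
    (hA : A = (1 / (2 * h₁ ^ α)) •
                ((Dh ⊗ₖ Dt) * ((1 : Matrix (Fin M₂) (Fin M₂) ℝ) ⊗ₖ Gmat α M₁)) +
              (1 / (2 * h₂ ^ β)) •
                ((Eh ⊗ₖ Et) * (Gmat β M₂ ⊗ₖ (1 : Matrix (Fin M₁) (Fin M₁) ℝ)))) :
    (Eh⁻¹ ⊗ₖ Dt⁻¹).PosDef ∧
    (-(((1 : ℝ) / 2) • ((Eh⁻¹ ⊗ₖ Dt⁻¹) * A + ((Eh⁻¹ ⊗ₖ Dt⁻¹) * A)ᵀ))).PosSemidef := by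
  have hxi (i : Fin M₁) : xL + ((i : ℕ) + 1) * h₁ ∈ Set.Ioo xL xR :=
    hh₁ ▸ add_mul_div_mem_Ioo hx i.isLt
  have hyj (j : Fin M₂) : yL + ((j : ℕ) + 1) * h₂ ∈ Set.Ioo yL yR :=
    hh₂ ▸ add_mul_div_mem_Ioo hy j.isLt
  have hdt_pos (i : Fin M₁) := hdtm.trans_le (hdt _ (hxi i)).1
  have heh_pos (j : Fin M₂) := hehm.trans_le (heh _ (hyj j)).1
  have hc₁ : 0 ≤ 1 / (2 * h₁ ^ α) := by
    have : 0 < h₁ := hh₁ ▸ div_pos (sub_pos.2 hx) (by positivity)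
    positivity
  have hc₂ : 0 ≤ 1 / (2 * h₂ ^ β) := by
    have : 0 < h₂ := hh₂ ▸ div_pos (sub_pos.2 hy) (by positivity)
    positivity
  have hDt_posDef : Dt.PosDef := hDt ▸ posDef_diagonal_iff.2 hdt_pos
  have hEh_posDef : Eh.PosDef := hEh ▸ posDef_diagonal_iff.2 heh_pos
  refine ⟨hEh_posDef.inv.kronecker hDt_posDef.inv, ?_⟩
  rw [hA, inv_kronecker_inv_mul hEh_posDef.isUnit hDt_posDef.isUnit]
  refine posSemidef_neg_symmPart_of_kronecker ?_ ?_
    (neg_Gmat_add_transpose_posSemidef hα.1.le hα.2.le M₁)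
    (neg_Gmat_add_transpose_posSemidef hβ.1.le hβ.2.le M₂) hc₁ hc₂ rfl
  · exact hEh ▸ hDh ▸ posSemidef_inv_diagonal_mul_diagonal heh_pos fun j => hdh _ (hyj j)
  · exact hDt ▸ hEt ▸ posSemidef_inv_diagonal_mul_diagonal hdt_pos fun i => het _ (hxi i)

/-- Corollary 3.1 (separable coefficients): if `d(x,y) = d̃(x)d̂(y)`, `e(x,y) = ẽ(x)ê(y)`
with `0 < d̃₋ ≤ d̃ ≤ d̃₊`, `0 < ê₋ ≤ ê ≤ ê₊` and `d̂ ≥ 0`, `ẽ ≥ 0`, then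
`X = Ê⁻¹ ⊗ D̃⁻¹` is symmetric positive definite and the symmetric part of `X·A` is
negative semidefinite. -/
theorem separable_coefficients_mem (α β : ℝ)
    (hα : α ∈ Set.Ioo (1 : ℝ) 2) (hβ : β ∈ Set.Ioo (1 : ℝ) 2)
    (M₁ M₂ : ℕ) (hM₁ : 0 < M₁) (hM₂ : 0 < M₂)
    (xL xR yL yR : ℝ) (hx : xL < xR) (hy : yL < yR)
    (h₁ h₂ : ℝ) (hh₁ : h₁ = (xR - xL) / (M₁ + 1)) (hh₂ : h₂ = (yR - yL) / (M₂ + 1))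
    (dt dh et eh : ℝ → ℝ)
    (dtm dtp ehm ehp : ℝ) (hdtm : 0 < dtm) (hehm : 0 < ehm)
    (hdt : ∀ x ∈ Set.Ioo xL xR, dtm ≤ dt x ∧ dt x ≤ dtp)
    (heh : ∀ y ∈ Set.Ioo yL yR, ehm ≤ eh y ∧ eh y ≤ ehp)
    (hdh : ∀ y ∈ Set.Ioo yL yR, 0 ≤ dh y)
    (het : ∀ x ∈ Set.Ioo xL xR, 0 ≤ et x)
    (Dt Et : Matrix (Fin M₁) (Fin M₁) ℝ) (Dh Eh : Matrix (Fin M₂) (Fin M₂) ℝ)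
    (hDt : Dt = Matrix.diagonal fun i : Fin M₁ => dt (xL + ((i : ℕ) + 1) * h₁))
    (hEt : Et = Matrix.diagonal fun i : Fin M₁ => et (xL + ((i : ℕ) + 1) * h₁))
    (hDh : Dh = Matrix.diagonal fun j : Fin M₂ => dh (yL + ((j : ℕ) + 1) * h₂))
    (hEh : Eh = Matrix.diagonal fun j : Fin M₂ => eh (yL + ((j : ℕ) + 1) * h₂))
    (A : Matrix (Fin M₂ × Fin M₁) (Fin M₂ × Fin M₁) ℝ)
    (hA : A = (1 / (2 * h₁ ^ α)) •
                ((Dh ⊗ₖ Dt) * ((1 : Matrix (Fin M₂) (Fin M₂) ℝ) ⊗ₖ Gmat α M₁)) +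
              (1 / (2 * h₂ ^ β)) •
                ((Eh ⊗ₖ Et) * (Gmat β M₂ ⊗ₖ (1 : Matrix (Fin M₁) (Fin M₁) ℝ)))) :
    (Eh⁻¹ ⊗ₖ Dt⁻¹).PosDef ∧
    (-(((1 : ℝ) / 2) • ((Eh⁻¹ ⊗ₖ Dt⁻¹) * A + ((Eh⁻¹ ⊗ₖ Dt⁻¹) * A)ᵀ))).PosSemidef :=
  separable_coefficients_mem_general α β hα hβ M₁ M₂ xL xR yL yR hx hy h₁ h₂ hh₁ hh₂ dt dh et eh dtm
    dtp ehm ehp hdtm hehm hdt heh hdh het Dt Et Dh Eh hDt hEt hDh hEh A hA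
end

section
/- For all α, β ∈ (1,2), all positive integers M₁, M₂, all η_x, η_y > 0 and all d̄, ē ≥ 0, the matrix P = I_{M₁M₂} + d̄·B_x + ē·B_y is invertible, where B_x = −η_x·(I_{M₂} ⊗ G_α) and B_y = −η_y·(G_β ⊗ I_{M₁}). -/
open Matrix Kronecker

section coef
variable {γ : ℝ} (h1 : 1 < γ) (h2 : γ < 2)

lemma g0 : gcoef γ 0 = 1 := rfl
lemma g1 : gcoef γ 1 = -γ := by simp [gcoef]
lemma g2 : gcoef γ 2 = (1 - (γ+1)/2) * (-γ) := by
  show (1 - (γ+1)/((1:ℕ)+1 : ℕ)) * gcoef γ 1 = _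
  rw [g1]; norm_num

lemma w0 : wcoef γ 0 = γ / 2 := by simp [wcoef, g0]
lemma w1 : wcoef γ 1 = γ/2 * (-γ) + (2-γ)/2 := by simp [wcoef, g1, g0]

include h1 in
lemma w1_neg : wcoef γ 1 < 0 := by rw [w1]; nlinarith

include h1 h2 in
lemma w02_nonneg : 0 ≤ wcoef γ 0 + wcoef γ 2 := by
  have : wcoef γ 2 = γ/2 * gcoef γ 2 + (2-γ)/2 * gcoef γ 1 := rfl
  rw [w0, this, g1, g2]
  have h3 : (0:ℝ) ≤ γ * (γ-1) * (γ+2) := by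
    apply mul_nonneg (mul_nonneg (by linarith) (by linarith)); linarith
  nlinarith [h3]

include h1 h2 in
lemma gcoef_pos : ∀ k, 2 ≤ k → 0 < gcoef γ k := by
  intro k hk
  induction k with
  | zero => omega
  | succ n ih =>
    rcases Nat.lt_or_ge n 2 with hn | hn
    · interval_cases n
      · omega
      · show 0 < (1 - (γ+1)/((1:ℕ)+1 : ℕ)) * gcoef γ 1
        rw [g1]; push_cast; nlinarith
    · show 0 < (1 - (γ+1)/((n:ℕ)+1 : ℕ)) * gcoef γ n
      have hg := ih hn
      have : (γ+1)/((n:ℕ)+1 : ℕ) < 1 := by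
        rw [div_lt_one (by positivity)]
        push_cast
        have hn2 : (2:ℝ) ≤ n := by exact_mod_cast hn
        nlinarith
      nlinarith

include h1 h2 in
lemma wcoef_pos : ∀ k, 3 ≤ k → 0 < wcoef γ k := by
  rintro (_|k) hk
  · omega
  · show 0 < γ/2 * gcoef γ (k+1) + (2-γ)/2 * gcoef γ k
    have := gcoef_pos h1 h2 (k+1) (by omega)
    have := gcoef_pos h1 h2 k (by omega)
    nlinarith

noncomputable def Tsum (γ : ℝ) (n : ℕ) : ℝ := ∑ k ∈ Finset.range (n+1), gcoef γ k

lemma Tsum_zero : Tsum γ 0 = 1 := by simp [Tsum, g0]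

lemma Tsum_succ (n : ℕ) : Tsum γ (n+1) = Tsum γ n + gcoef γ (n+1) := by
  simp [Tsum, Finset.sum_range_succ]

lemma gcoef_eq_Tsum (n : ℕ) : gcoef γ (n+1) = -(γ/(n+1)) * Tsum γ n := by
  induction n with
  | zero => rw [Tsum_zero, g1]; ring
  | succ n ih =>
    have hne : ((n:ℝ)+1) ≠ 0 := by positivity
    have hne2 : ((n:ℝ)+2) ≠ 0 := by positivity
    show (1 - (γ+1)/((n+1:ℕ)+1 : ℕ)) * gcoef γ (n+1) = _
    rw [Tsum_succ, ih]
    push_cast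
    field_simp
    ring

lemma Tsum_succ_eq (n : ℕ) : Tsum γ (n+1) = (1 - γ/(n+1)) * Tsum γ n := by
  rw [Tsum_succ, gcoef_eq_Tsum]; ring

include h1 h2 in
lemma Tsum_neg : ∀ n, 1 ≤ n → Tsum γ n < 0 := by
  intro n hn
  induction n with
  | zero => omega
  | succ n ih =>
    rcases Nat.eq_zero_or_pos n with rfl | hn'
    · rw [Tsum_succ_eq, Tsum_zero]; norm_num; linarith
    · rw [Tsum_succ_eq]
      have h3 : (0:ℝ) < 1 - γ/(n+1) := by
        have : (1:ℝ) ≤ n := by exact_mod_cast hn'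
        have : γ/((n:ℝ)+1) < 1 := by rw [div_lt_one (by positivity)]; linarith
        linarith
      have := ih hn'
      nlinarith

noncomputable def Wsum (γ : ℝ) (n : ℕ) : ℝ := ∑ k ∈ Finset.range (n+1), wcoef γ k

lemma Wsum_zero : Wsum γ 0 = wcoef γ 0 := by simp [Wsum]

lemma Wsum_eq : ∀ n : ℕ, Wsum γ (n+1) = γ/2 * Tsum γ (n+1) + (2-γ)/2 * Tsum γ n := by
  intro n
  induction n with
  | zero =>
    show ∑ k ∈ Finset.range 2, wcoef γ k = _
    rw [Finset.sum_range_succ, Finset.sum_range_one, Tsum_succ, Tsum_zero, w0, w1, g1]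
    ring
  | succ n ih =>
    show ∑ k ∈ Finset.range (n+3), wcoef γ k = _
    rw [Finset.sum_range_succ]
    have : ∑ k ∈ Finset.range (n+2), wcoef γ k = Wsum γ (n+1) := rfl
    rw [this, ih, Tsum_succ (n+1), Tsum_succ n]
    show _ + (γ/2 * gcoef γ (n+2) + (2-γ)/2 * gcoef γ (n+1)) = _
    ring

include h1 h2 in
lemma Wsum_neg : ∀ n, 2 ≤ n → Wsum γ n < 0 := by
  rintro (_|n) hn
  · omega
  · rw [Wsum_eq]
    have := Tsum_neg h1 h2 (n+1) (by omega)
    have := Tsum_neg h1 h2 n (by omega)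
    nlinarith

end coef

section mat
variable {γ : ℝ} {m : ℕ} (h1 : 1 < γ) (h2 : γ < 2)

lemma rowsum_G (i : Fin m) :
    ∑ j, Gmat γ m i j = ∑ k ∈ Finset.Icc ((i:ℕ)+2-m) ((i:ℕ)+1), wcoef γ k := by
  have hi := i.isLt
  have e1 : ∑ j, Gmat γ m i j
      = ∑ j ∈ Finset.range m, (if j ≤ (i:ℕ)+1 then wcoef γ ((i:ℕ)+1-j) else 0) :=
    Fin.sum_univ_eq_sum_range (fun j => if j ≤ (i:ℕ)+1 then wcoef γ ((i:ℕ)+1-j) else 0) m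
  rw [e1, ← Finset.sum_filter]
  refine Finset.sum_nbij' (i := fun j => (i:ℕ)+1-j) (j := fun k => (i:ℕ)+1-k) ?_ ?_ ?_ ?_ ?_
  · intro a ha; simp only [Finset.mem_filter, Finset.mem_range] at ha
    simp only [Finset.mem_Icc]; omega
  · intro a ha; simp only [Finset.mem_Icc] at ha
    simp only [Finset.mem_filter, Finset.mem_range]; omega
  · intro a ha; simp only [Finset.mem_filter, Finset.mem_range] at ha; omega
  · intro a ha; simp only [Finset.mem_Icc] at ha; omega
  · intro a ha; rfl

lemma colsum_G (i : Fin m) :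
    ∑ r, Gmat γ m r i = ∑ k ∈ Finset.Icc (1-(i:ℕ)) (m-(i:ℕ)), wcoef γ k := by
  have hi := i.isLt
  have e1 : ∑ r, Gmat γ m r i
      = ∑ r ∈ Finset.range m, (if (i:ℕ) ≤ r+1 then wcoef γ (r+1-(i:ℕ)) else 0) :=
    Fin.sum_univ_eq_sum_range (fun r => if (i:ℕ) ≤ r+1 then wcoef γ (r+1-(i:ℕ)) else 0) m
  rw [e1, ← Finset.sum_filter]
  refine Finset.sum_nbij' (i := fun r => r+1-(i:ℕ)) (j := fun k => k+(i:ℕ)-1) ?_ ?_ ?_ ?_ ?_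
  · intro a ha; simp only [Finset.mem_filter, Finset.mem_range] at ha
    simp only [Finset.mem_Icc]; omega
  · intro a ha; simp only [Finset.mem_Icc] at ha
    simp only [Finset.mem_filter, Finset.mem_range]; omega
  · intro a ha; simp only [Finset.mem_filter, Finset.mem_range] at ha; omega
  · intro a ha; simp only [Finset.mem_Icc] at ha; omega
  · intro a ha; rfl

lemma Icc_zero_wsum (n : ℕ) : ∑ k ∈ Finset.Icc 0 n, wcoef γ k = Wsum γ n := by
  rw [Wsum]; congr 1; ext x; simp [Nat.lt_succ_iff]

lemma Icc_one_wsum (n : ℕ) : ∑ k ∈ Finset.Icc 1 n, wcoef γ k = Wsum γ n - wcoef γ 0 := by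
  have h : Finset.Icc 0 n = insert 0 (Finset.Icc 1 n) := by ext x; simp; omega
  have h0 : (0:ℕ) ∉ Finset.Icc 1 n := by simp
  have := Icc_zero_wsum (γ := γ) n
  rw [h, Finset.sum_insert h0] at this
  linarith

include h1 h2 in
lemma Hrowsum_nonpos (i : Fin m) :
    ∑ j, (Gmat γ m i j + Gmat γ m j i) ≤ 0 := by
  rw [Finset.sum_add_distrib, rowsum_G, colsum_G]
  have hi := i.isLt
  have hw1 := w1_neg (γ := γ) h1
  have hW1 : Wsum γ 1 = wcoef γ 0 + wcoef γ 1 := by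
    simp [Wsum, Finset.sum_range_succ]
  rcases Nat.lt_or_ge m 2 with hm | hm
  · -- m = 1, i = 0
    have hm1 : m = 1 := by omega
    have hi0 : (i:ℕ) = 0 := by omega
    rw [hi0, hm1]
    norm_num
    linarith
  · rcases Nat.eq_zero_or_pos (i:ℕ) with hi0 | hipos
    · -- i = 0
      rw [hi0]
      rw [show (0+2-m : ℕ) = 0 from by omega, show (1-0 : ℕ) = 1 from rfl,
        show (m-0 : ℕ) = m from rfl]
      rw [Icc_zero_wsum, Icc_one_wsum, hW1]
      have := Wsum_neg h1 h2 m hm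
      linarith
    · rcases Nat.lt_or_ge (i:ℕ) (m-1) with him | him
      · -- middle row
        rw [show ((i:ℕ)+2-m : ℕ) = 0 from by omega, show (1-(i:ℕ) : ℕ) = 0 from by omega]
        rw [Icc_zero_wsum, Icc_zero_wsum]
        have := Wsum_neg h1 h2 ((i:ℕ)+1) (by omega)
        have := Wsum_neg h1 h2 (m-(i:ℕ)) (by omega)
        linarith
      · -- i = m-1
        have hieq : (i:ℕ) = m-1 := by omega
        rw [show ((i:ℕ)+2-m : ℕ) = 1 from by omega, show ((i:ℕ)+1 : ℕ) = m from by omega,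
          show (1-(i:ℕ) : ℕ) = 0 from by omega, show (m-(i:ℕ) : ℕ) = 1 from by omega]
        rw [Icc_zero_wsum, Icc_one_wsum, hW1]
        have := Wsum_neg h1 h2 m hm
        linarith

include h1 h2 in
lemma Hoff_nonneg {i j : Fin m} (hne : i ≠ j) :
    0 ≤ Gmat γ m i j + Gmat γ m j i := by
  have hne' : (i:ℕ) ≠ (j:ℕ) := fun h => hne (Fin.ext h)
  show 0 ≤ (if (j:ℕ) ≤ (i:ℕ)+1 then wcoef γ ((i:ℕ)+1-(j:ℕ)) else 0)
        + (if (i:ℕ) ≤ (j:ℕ)+1 then wcoef γ ((j:ℕ)+1-(i:ℕ)) else 0)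
  rcases Nat.lt_or_ge ((i:ℕ)+1) (j:ℕ) with h | h
  · rw [if_neg (by omega), if_pos (by omega)]
    have := wcoef_pos h1 h2 ((j:ℕ)+1-(i:ℕ)) (by omega)
    linarith
  rcases Nat.lt_or_ge ((j:ℕ)+1) (i:ℕ) with h' | h'
  · rw [if_pos (by omega), if_neg (by omega)]
    have := wcoef_pos h1 h2 ((i:ℕ)+1-(j:ℕ)) (by omega)
    linarith
  -- |i - j| = 1
  rcases Nat.lt_or_ge (i:ℕ) (j:ℕ) with hij | hij
  · have hj : (j:ℕ) = (i:ℕ)+1 := by omega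
    rw [if_pos (by omega), if_pos (by omega), hj]
    rw [show ((i:ℕ)+1-((i:ℕ)+1) : ℕ) = 0 from by omega,
      show ((i:ℕ)+1+1-(i:ℕ) : ℕ) = 2 from by omega]
    exact w02_nonneg h1 h2
  · have hii : (i:ℕ) = (j:ℕ)+1 := by omega
    rw [if_pos (by omega), if_pos (by omega), hii]
    rw [show ((j:ℕ)+1+1-(j:ℕ) : ℕ) = 2 from by omega,
      show ((j:ℕ)+1-((j:ℕ)+1) : ℕ) = 0 from by omega]
    have := w02_nonneg h1 h2
    linarith

/-- General: a symmetric-ish quadratic bound. -/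
lemma quad_nonpos_of_dominant (A : Matrix (Fin m) (Fin m) ℝ)
    (hsym : ∀ i j, A i j = A j i)
    (hoff : ∀ i j, i ≠ j → 0 ≤ A i j)
    (hrow : ∀ i, ∑ j, A i j ≤ 0) (x : Fin m → ℝ) :
    x ⬝ᵥ A *ᵥ x ≤ 0 := by
  have expand : x ⬝ᵥ A *ᵥ x = ∑ i, ∑ j, x i * (A i j * x j) := by
    simp [dotProduct, mulVec, Finset.mul_sum]
  rw [expand]
  have key : ∀ i j, x i * (A i j * x j) ≤ A i j * (x i^2 + x j^2) / 2 := by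
    intro i j
    rcases eq_or_ne i j with rfl | hne
    · apply le_of_eq; ring
    · have h0 := hoff i j hne
      nlinarith [sq_nonneg (x i - x j)]
  calc ∑ i, ∑ j, x i * (A i j * x j)
      ≤ ∑ i, ∑ j, A i j * (x i^2 + x j^2) / 2 :=
        Finset.sum_le_sum (fun i _ => Finset.sum_le_sum (fun j _ => key i j))
    _ = ∑ i : Fin m, (x i^2) * ∑ j, A i j := by
        have step : ∀ i j : Fin m, A i j * (x i^2 + x j^2) / 2
            = A i j * x i^2 / 2 + A i j * x j^2 / 2 := fun i j => by ring
        simp only [step, Finset.sum_add_distrib]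
        have swap : ∑ i : Fin m, ∑ j : Fin m, A i j * x j^2 / 2
            = ∑ i : Fin m, ∑ j : Fin m, A i j * x i^2 / 2 := by
          rw [Finset.sum_comm]
          apply Finset.sum_congr rfl; intro i _
          apply Finset.sum_congr rfl; intro j _
          rw [hsym j i]
        rw [swap]
        rw [← Finset.sum_add_distrib]
        apply Finset.sum_congr rfl; intro i _
        rw [← Finset.sum_add_distrib, Finset.mul_sum]
        apply Finset.sum_congr rfl; intro j _
        ring
    _ ≤ 0 := Finset.sum_nonpos (fun i _ =>
        mul_nonpos_of_nonneg_of_nonpos (sq_nonneg _) (hrow i))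

include h1 h2 in
lemma Gmat_quad_nonpos (x : Fin m → ℝ) : x ⬝ᵥ (Gmat γ m) *ᵥ x ≤ 0 := by
  set G := Gmat γ m
  have hGT : x ⬝ᵥ Gᵀ *ᵥ x = x ⬝ᵥ G *ᵥ x := by
    rw [Matrix.dotProduct_mulVec, Matrix.vecMul_transpose, dotProduct_comm]
  have hq : x ⬝ᵥ (G + Gᵀ) *ᵥ x ≤ 0 := by
    apply quad_nonpos_of_dominant
    · intro i j; simp [Matrix.add_apply, Matrix.transpose_apply]; ring
    · intro i j hne
      have := Hoff_nonneg h1 h2 (m := m) hne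
      simpa [Matrix.add_apply, Matrix.transpose_apply] using this
    · intro i
      have := Hrowsum_nonpos h1 h2 (m := m) i
      simpa [Matrix.add_apply, Matrix.transpose_apply] using this
  rw [Matrix.add_mulVec, dotProduct_add, hGT] at hq
  linarith

end mat

section kron

lemma kron_left_quad {p n : ℕ} (G : Matrix (Fin n) (Fin n) ℝ)
    (h : ∀ y : Fin n → ℝ, y ⬝ᵥ G *ᵥ y ≤ 0) (x : Fin p × Fin n → ℝ) :
    x ⬝ᵥ ((1 : Matrix (Fin p) (Fin p) ℝ) ⊗ₖ G) *ᵥ x ≤ 0 := by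
  have e : x ⬝ᵥ ((1 : Matrix (Fin p) (Fin p) ℝ) ⊗ₖ G) *ᵥ x
      = ∑ a : Fin p, (fun b => x (a, b)) ⬝ᵥ G *ᵥ (fun b => x (a, b)) := by
    simp only [dotProduct, mulVec, kroneckerMap_apply, Matrix.one_apply,
      Fintype.sum_prod_type, ite_mul, one_mul, zero_mul]
    apply Finset.sum_congr rfl; intro a _
    apply Finset.sum_congr rfl; intro b _
    congr 1
    rw [Finset.sum_comm]
    simp [Finset.sum_ite_eq]
  rw [e]
  exact Finset.sum_nonpos (fun a _ => h _)

lemma kron_right_quad {p n : ℕ} (G : Matrix (Fin p) (Fin p) ℝ)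
    (h : ∀ y : Fin p → ℝ, y ⬝ᵥ G *ᵥ y ≤ 0) (x : Fin p × Fin n → ℝ) :
    x ⬝ᵥ (G ⊗ₖ (1 : Matrix (Fin n) (Fin n) ℝ)) *ᵥ x ≤ 0 := by
  have e : x ⬝ᵥ (G ⊗ₖ (1 : Matrix (Fin n) (Fin n) ℝ)) *ᵥ x
      = ∑ b : Fin n, (fun a => x (a, b)) ⬝ᵥ G *ᵥ (fun a => x (a, b)) := by
    simp only [dotProduct, mulVec, kroneckerMap_apply, Matrix.one_apply,
      Fintype.sum_prod_type, mul_ite, ite_mul, one_mul, zero_mul, mul_zero,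
      Finset.sum_ite_eq, Finset.mem_univ, if_true, mul_one]
    rw [Finset.sum_comm]
  rw [e]
  exact Finset.sum_nonpos (fun b _ => h _)

end kron

/-- Proposition 3.1: the two-level Toeplitz preconditioner
`P = I + d̄ B_x + ē B_y` with `B_x = −η_x (I_{M₂} ⊗ G_α)` and `B_y = −η_y (G_β ⊗ I_{M₁})`
is invertible for all `α, β ∈ (1,2)`, `η_x, η_y > 0` and `d̄, ē ≥ 0`. -/
theorem toeplitz_preconditioner_2D_invertible (α β : ℝ)
    (hα : α ∈ Set.Ioo (1 : ℝ) 2) (hβ : β ∈ Set.Ioo (1 : ℝ) 2)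
    (M₁ M₂ : ℕ) (hM₁ : 0 < M₁) (hM₂ : 0 < M₂)
    (ηx ηy : ℝ) (hηx : 0 < ηx) (hηy : 0 < ηy)
    (dbar ebar : ℝ) (hdbar : 0 ≤ dbar) (hebar : 0 ≤ ebar) :
    IsUnit ((1 : Matrix (Fin M₂ × Fin M₁) (Fin M₂ × Fin M₁) ℝ) +
      dbar • (-ηx • ((1 : Matrix (Fin M₂) (Fin M₂) ℝ) ⊗ₖ Gmat α M₁)) +
      ebar • (-ηy • (Gmat β M₂ ⊗ₖ (1 : Matrix (Fin M₁) (Fin M₁) ℝ)))) := by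
  obtain ⟨hα1, hα2⟩ := hα
  obtain ⟨hβ1, hβ2⟩ := hβ
  set K₁ := (1 : Matrix (Fin M₂) (Fin M₂) ℝ) ⊗ₖ Gmat α M₁ with hK₁
  set K₂ := Gmat β M₂ ⊗ₖ (1 : Matrix (Fin M₁) (Fin M₁) ℝ) with hK₂
  set P := (1 : Matrix (Fin M₂ × Fin M₁) (Fin M₂ × Fin M₁) ℝ) +
      dbar • (-ηx • K₁) + ebar • (-ηy • K₂) with hP
  rw [Matrix.isUnit_iff_isUnit_det, isUnit_iff_ne_zero]
  intro hdet
  rw [← Matrix.exists_mulVec_eq_zero_iff] at hdet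
  obtain ⟨v, hv, hPv⟩ := hdet
  have q1 : v ⬝ᵥ K₁ *ᵥ v ≤ 0 :=
    kron_left_quad _ (fun y => Gmat_quad_nonpos hα1 hα2 y) v
  have q2 : v ⬝ᵥ K₂ *ᵥ v ≤ 0 :=
    kron_right_quad _ (fun y => Gmat_quad_nonpos hβ1 hβ2 y) v
  have hexp : v ⬝ᵥ (P *ᵥ v) = v ⬝ᵥ v
      + (dbar * (-ηx)) * (v ⬝ᵥ K₁ *ᵥ v) + (ebar * (-ηy)) * (v ⬝ᵥ K₂ *ᵥ v) := by
    rw [hP]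
    rw [Matrix.add_mulVec, Matrix.add_mulVec, Matrix.one_mulVec,
      Matrix.smul_mulVec, Matrix.smul_mulVec,
      Matrix.smul_mulVec, Matrix.smul_mulVec,
      dotProduct_add, dotProduct_add, dotProduct_smul, dotProduct_smul,
      dotProduct_smul, dotProduct_smul]
    simp only [smul_eq_mul]
    ring
  rw [hPv, dotProduct_zero] at hexp
  have hvv : 0 < v ⬝ᵥ v := by
    have hnn : 0 ≤ v ⬝ᵥ v := Finset.sum_nonneg fun i _ => mul_self_nonneg _
    have hne : v ⬝ᵥ v ≠ 0 := fun h => hv (dotProduct_self_eq_zero.mp h)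
    exact lt_of_le_of_ne hnn (Ne.symm hne)
  have t1 : 0 ≤ (dbar * ηx) * (-(v ⬝ᵥ K₁ *ᵥ v)) :=
    mul_nonneg (mul_nonneg hdbar hηx.le) (by linarith)
  have t2 : 0 ≤ (ebar * ηy) * (-(v ⬝ᵥ K₂ *ᵥ v)) :=
    mul_nonneg (mul_nonneg hebar hηy.le) (by linarith)
  nlinarith [t1, t2, hvv, hexp]
end
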